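/- The average potential energy per degree of freedom of the hypercubic model, ⟨v⟩(β;N) = v_c(b^N − 2a^N)e^{−βNv_c} / (2a^N + (b^N − 2a^N)e^{−βNv_c}), converges as N → ∞ to 0 if β > β_c and to v_c if 0 < β < β_c, where β_c = log(b/a)/v_c. -/

import Mathlib

open Filter Real
open Topology

/-! Let `r_N = (b^N − 2a^N) e^{−βNv_c} / (2a^N)` be the ratio of the Boltzmann weight of the
excited configurations to that of the ground configurations, so that `⟨v⟩ = v_c r_N / (1 + r_N)`.
With `ρ = e^{−βv_c}` one has `r_N = ((bρ/a)^N − 2ρ^N)/2`, and `bρ < a` exactly when `β > β_c`.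
Above `β_c` the ratio therefore tends to `0` and `⟨v⟩ → 0`; below `β_c`, with `β > 0` so that
`ρ < 1`, it tends to `∞` and `⟨v⟩ → v_c`. -/

theorem div_add_self_eq_div_one_add_div {K : Type*} [Field K] {x y : K} (hy : y ≠ 0) :
    x / (y + x) = x / y / (1 + x / y) := by
  rw [← div_self hy, ← add_div, div_div_div_cancel_right₀ hy]

theorem tendsto_div_one_add_nhds_zero :
    Tendsto (fun t : ℝ => t / (1 + t)) (𝓝 0) (𝓝 0) := by
  have h : ContinuousAt (fun t : ℝ => t / (1 + t)) 0 :=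
    continuousAt_id.div (continuousAt_const.add continuousAt_id) (by norm_num)
  simpa using h.tendsto

theorem tendsto_div_one_add_atTop :
    Tendsto (fun t : ℝ => t / (1 + t)) atTop (𝓝 1) := by
  have h : Tendsto (fun t : ℝ => (t⁻¹ + 1)⁻¹) atTop (𝓝 (0 + 1)⁻¹) :=
    (tendsto_inv_atTop_zero.add_const 1).inv₀ (by norm_num)
  rw [zero_add, inv_one] at h
  refine h.congr' ?_
  filter_upwards [eventually_gt_atTop 0] with t ht
  field_simp

theorem mul_exp_neg_lt_iff {a b : ℝ} (ha : 0 < a) (hb : 0 < b) (t : ℝ) :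
    b * exp (-t) < a ↔ log (b / a) < t := by
  rw [log_lt_iff_lt_exp (div_pos hb ha), div_lt_iff₀ ha, exp_neg, ← div_eq_mul_inv,
    div_lt_iff₀ (exp_pos t), mul_comm]

theorem lt_mul_exp_neg_iff {a b : ℝ} (ha : 0 < a) (hb : 0 < b) (t : ℝ) :
    a < b * exp (-t) ↔ t < log (b / a) := by
  rw [lt_log_iff_exp_lt (div_pos hb ha), lt_div_iff₀ ha, exp_neg, ← div_eq_mul_inv,
    lt_div_iff₀ (exp_pos t), mul_comm]

noncomputable def hypercubicAverageEnergy (a b vc β : ℝ) (N : ℕ) : ℝ :=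
  vc * ((b ^ N - 2 * a ^ N) * exp (-(β * N * vc))) /
    (2 * a ^ N + (b ^ N - 2 * a ^ N) * exp (-(β * N * vc)))

noncomputable def hypercubicWeightRatio (a b vc β : ℝ) (N : ℕ) : ℝ :=
  (b ^ N - 2 * a ^ N) * exp (-(β * N * vc)) / (2 * a ^ N)

section Hypercubic

variable {a b vc β : ℝ}

theorem hypercubicAverageEnergy_eq (ha : a ≠ 0) (N : ℕ) :
    hypercubicAverageEnergy a b vc β N =
      vc * (hypercubicWeightRatio a b vc β N / (1 + hypercubicWeightRatio a b vc β N)) := by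
  rw [hypercubicAverageEnergy, mul_div_assoc,
    div_add_self_eq_div_one_add_div (by simp [ha] : 2 * a ^ N ≠ 0), hypercubicWeightRatio]

theorem hypercubicWeightRatio_eq (ha : a ≠ 0) (N : ℕ) :
    hypercubicWeightRatio a b vc β N =
      ((b * exp (-(β * vc)) / a) ^ N - 2 * exp (-(β * vc)) ^ N) / 2 := by
  have hexp : exp (-(β * N * vc)) = exp (-(β * vc)) ^ N := by
    rw [← exp_nat_mul]; ring_nf
  rw [hypercubicWeightRatio, hexp, div_pow, mul_pow]
  field_simp

theorem tendsto_hypercubicWeightRatio_zero (ha : 0 < a) (hab : a < b)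
    (hβ : log (b / a) < β * vc) :
    Tendsto (hypercubicWeightRatio a b vc β) atTop (𝓝 0) := by
  have hb : 0 < b := ha.trans hab
  have hq : b * exp (-(β * vc)) / a < 1 :=
    (div_lt_one ha).2 ((mul_exp_neg_lt_iff ha hb _).2 hβ)
  have hρ : exp (-(β * vc)) < 1 := by
    rw [exp_lt_one_iff, neg_lt_zero]
    exact (log_pos ((one_lt_div ha).2 hab)).trans hβ
  have h := ((tendsto_pow_atTop_nhds_zero_of_lt_one (by positivity) hq).sub
    ((tendsto_pow_atTop_nhds_zero_of_lt_one (exp_pos _).le hρ).const_mul 2)).div_const 2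
  rw [mul_zero, sub_zero, zero_div] at h
  exact h.congr fun N => (hypercubicWeightRatio_eq ha.ne' N).symm

theorem tendsto_hypercubicWeightRatio_atTop (ha : 0 < a) (hb : 0 < b) (hβ₀ : 0 < β * vc)
    (hβ : β * vc < log (b / a)) :
    Tendsto (hypercubicWeightRatio a b vc β) atTop atTop := by
  have hq : 1 < b * exp (-(β * vc)) / a :=
    (one_lt_div ha).2 ((lt_mul_exp_neg_iff ha hb _).2 hβ)
  have hρ : exp (-(β * vc)) < 1 := by rwa [exp_lt_one_iff, neg_lt_zero]
  have h := ((tendsto_pow_atTop_atTop_of_one_lt hq).atTop_add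
    ((tendsto_pow_atTop_nhds_zero_of_lt_one (exp_pos _).le hρ).const_mul (-2))).atTop_div_const
    two_pos
  refine h.congr fun N => ?_
  rw [hypercubicWeightRatio_eq ha.ne']
  ring

theorem tendsto_hypercubicAverageEnergy_zero (ha : 0 < a) (hab : a < b) (hvc : 0 < vc)
    (hβ : log (b / a) / vc < β) :
    Tendsto (hypercubicAverageEnergy a b vc β) atTop (𝓝 0) := by
  have h := (tendsto_div_one_add_nhds_zero.comp (tendsto_hypercubicWeightRatio_zero ha hab
    ((div_lt_iff₀ hvc).1 hβ))).const_mul vc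
  rw [mul_zero] at h
  exact h.congr fun N => (hypercubicAverageEnergy_eq ha.ne' N).symm

theorem tendsto_hypercubicAverageEnergy_vc (ha : 0 < a) (hb : 0 < b) (hvc : 0 < vc)
    (hβ₀ : 0 < β) (hβ : β < log (b / a) / vc) :
    Tendsto (hypercubicAverageEnergy a b vc β) atTop (𝓝 vc) := by
  have h := (tendsto_div_one_add_atTop.comp (tendsto_hypercubicWeightRatio_atTop ha hb
    (mul_pos hβ₀ hvc) ((lt_div_iff₀ hvc).1 hβ))).const_mul vc
  rw [mul_one] at h
  exact h.congr fun N => (hypercubicAverageEnergy_eq ha.ne' N).symm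

end Hypercubic

/-- The average potential energy per degree of freedom of the
hypercubic model, `⟨v⟩(β;N) = v_c (b^N − 2a^N) e^{−β N v_c} / Z_N(β)` with
`Z_N(β) = 2a^N + (b^N − 2a^N) e^{−β N v_c}`, converges as `N → ∞` to `0` if
`β > β_c` and to `v_c` if `0 < β < β_c`, where `β_c = log(b/a)/v_c`. -/
theorem hypercubic_average_energy_limit
    (a b vc β : ℝ) (ha : 0 < a) (hab : 2 * a < b) (hvc : 0 < vc) :
    (β > Real.log (b / a) / vc →
      Tendsto (fun N : ℕ =>
          vc * ((b ^ N - 2 * a ^ N) * Real.exp (-(β * N * vc))) /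
            (2 * a ^ N + (b ^ N - 2 * a ^ N) * Real.exp (-(β * N * vc))))
        atTop (nhds 0)) ∧
    (0 < β → β < Real.log (b / a) / vc →
      Tendsto (fun N : ℕ =>
          vc * ((b ^ N - 2 * a ^ N) * Real.exp (-(β * N * vc))) /
            (2 * a ^ N + (b ^ N - 2 * a ^ N) * Real.exp (-(β * N * vc))))
        atTop (nhds vc)) := by
  have hab' : a < b := by linarith
  exact ⟨tendsto_hypercubicAverageEnergy_zero ha hab' hvc,
    tendsto_hypercubicAverageEnergy_vc ha (ha.trans hab') hvc⟩
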